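/- Let K ⊆ ℂ be a nonempty compact convex set. If f ∈ Exp(K) is frequently hypercyclic for T₁ on Exp(K), then f is frequently hypercyclic for T₁ on H(ℂ). -/

import Mathlib

open Filter Complex

/-- Support function `H_K(z) = sup { Re (z·u) : u ∈ K }` of a set `K ⊆ ℂ`. -/
noncomputable def suppFn (K : Set ℂ) (z : ℂ) : ℝ :=
  sSup ((fun u => (z * u).re) '' K)

/-- The norm `‖f‖_{K,n} = sup_z |f z| · exp (−H_K z − |z|/n)`. -/
noncomputable def expNorm (K : Set ℂ) (n : ℕ) (f : ℂ → ℂ) : ℝ :=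
  sSup (Set.range fun z : ℂ => ‖f z‖ * Real.exp (-(suppFn K z) - ‖z‖ / n))

/-- Membership in `Exp(K)`: `f` is entire and all the norms `‖f‖_{K,n}` are finite. -/
def MemExp (K : Set ℂ) (f : ℂ → ℂ) : Prop :=
  Differentiable ℂ f ∧ ∀ n : ℕ, 0 < n →
    BddAbove (Set.range fun z : ℂ => ‖f z‖ * Real.exp (-(suppFn K z) - ‖z‖ / n))

open scoped Classical in
/-- Lower density of a set of natural numbers. -/
noncomputable def lowerDensity (A : Set ℕ) : ℝ :=
  liminf (fun N : ℕ =>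
    (((Finset.range (N + 1)).filter (fun n => n ∈ A)).card : ℝ) / N) atTop

/-- Lower density of a discrete subset of `ℂ`. -/
noncomputable def ldensC (Λ : Set ℂ) : ℝ :=
  liminf (fun r : ℝ => (Nat.card {z : ℂ // z ∈ Λ ∧ ‖z‖ ≤ r} : ℝ) / r) atTop

/-- `f` is hypercyclic for the translation `T₁` on `Exp(K)`. -/
def HCExp (K : Set ℂ) (f : ℂ → ℂ) : Prop :=
  MemExp K f ∧ ∀ g : ℂ → ℂ, MemExp K g → ∀ n : ℕ, 0 < n → ∀ ε > (0 : ℝ),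
    ∃ k : ℕ, expNorm K n (fun z => f (z + (k : ℂ)) - g z) < ε

/-- `f` is frequently hypercyclic for the translation `T₁` on `Exp(K)`. -/
def FHCExp (K : Set ℂ) (f : ℂ → ℂ) : Prop :=
  MemExp K f ∧ ∀ g : ℂ → ℂ, MemExp K g → ∀ n : ℕ, 0 < n → ∀ ε > (0 : ℝ),
    0 < lowerDensity {k : ℕ | expNorm K n (fun z => f (z + (k : ℂ)) - g z) < ε}

/-- `f` is hypercyclic (Birkhoff-universal) for `T₁` on `H(ℂ)`. -/
def HCEnt (f : ℂ → ℂ) : Prop :=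
  Differentiable ℂ f ∧ ∀ g : ℂ → ℂ, Differentiable ℂ g → ∀ R > (0 : ℝ), ∀ ε > (0 : ℝ),
    ∃ k : ℕ, ∀ z : ℂ, ‖z‖ ≤ R → ‖f (z + (k : ℂ)) - g z‖ < ε

/-- `f` is frequently hypercyclic (frequently Birkhoff-universal) for `T₁` on `H(ℂ)`. -/
def FHCEnt (f : ℂ → ℂ) : Prop :=
  Differentiable ℂ f ∧ ∀ g : ℂ → ℂ, Differentiable ℂ g → ∀ R > (0 : ℝ), ∀ ε > (0 : ℝ),
    0 < lowerDensity {k : ℕ | ∀ z : ℂ, ‖z‖ ≤ R → ‖f (z + (k : ℂ)) - g z‖ < ε}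

/-- `f` is an entire function of (finite) exponential type. -/
def ExpType (f : ℂ → ℂ) : Prop :=
  Differentiable ℂ f ∧ ∃ C τ : ℝ, ∀ z : ℂ, ‖f z‖ ≤ C * Real.exp (τ * ‖z‖)

/-- The indicator function `h_f(θ) = limsup_{r→∞} log |f(r e^{iθ})| / r`. -/
noncomputable def indicatorFn (f : ℂ → ℂ) (θ : ℝ) : ℝ :=
  limsup (fun r : ℝ => Real.log ‖f ((r : ℂ) * Complex.exp (θ * Complex.I))‖ / r) atTop

/-! Fix `u ∈ K` and `C` bounding `K`. Given an entire `g`, a radius `R` and `ε > 0`, a Taylor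
polynomial `q` approximates `g(z) e^{-uz}` on `|z| ≤ R`, so `P(z) = q(z) e^{uz}` lies in `Exp(K)`
and is `ε/2`-close to `g` there. Since `H_K(z) ≤ C|z|`, the weight `e^{-H_K(z) - |z|}` is at least
`e^{-(C + 1)R}` on that disc, so whenever `‖f(· + k) - P‖_{K,1}` is small, `f(· + k)` is uniformly
close to `P`, hence to `g`, on the disc. Such `k` have positive lower density. -/

open Polynomial Bornology

open scoped Classical in
lemma lowerDensity_mono {A B : Set ℕ} (h : A ⊆ B) : lowerDensity A ≤ lowerDensity B := by
  have hcard (N : ℕ) : ((Finset.range (N + 1)).filter (· ∈ A)).card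
      ≤ ((Finset.range (N + 1)).filter (· ∈ B)).card :=
    Finset.card_le_card (Finset.monotone_filter_right _ fun x _ => @h x)
  have hle_two (N : ℕ) : (((Finset.range (N + 1)).filter (· ∈ B)).card : ℝ) / N ≤ 2 := by
    rcases N.eq_zero_or_pos with rfl | hN
    · simp
    have hN' : (1 : ℝ) ≤ N := by exact_mod_cast hN
    have : (((Finset.range (N + 1)).filter (· ∈ B)).card : ℝ) ≤ N + 1 := by
      exact_mod_cast (Finset.card_filter_le _ _).trans (Finset.card_range _).le
    rw [div_le_iff₀ (by positivity)]
    linarith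
  refine liminf_le_liminf (Eventually.of_forall fun N => ?_)
    (isBoundedUnder_of ⟨0, fun N => by positivity⟩) (isCoboundedUnder_ge_of_le atTop hle_two)
  exact div_le_div_of_nonneg_right (mod_cast hcard N) N.cast_nonneg

lemma pow_mul_exp_neg_div_le {x : ℝ} (hx : 0 ≤ x) (k : ℕ) {n : ℝ} (hn : 0 < n) :
    x ^ k * Real.exp (-(x / n)) ≤ k.factorial * n ^ k := by
  have h := Real.pow_div_factorial_le_exp _ (div_nonneg hx hn.le) k
  rw [div_pow, div_div, div_le_iff₀ (by positivity)] at h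
  rw [Real.exp_neg, ← div_eq_mul_inv, div_le_iff₀ (Real.exp_pos _)]
  linarith

lemma re_mul_le_of_norm_le {v : ℂ} {C : ℝ} (hv : ‖v‖ ≤ C) (z : ℂ) : (z * v).re ≤ ‖z‖ * C :=
  (re_le_norm _).trans (by rw [norm_mul]; gcongr)

section SuppFn

variable {K : Set ℂ} {C : ℝ}

lemma re_mul_le_suppFn (hC : ∀ u ∈ K, ‖u‖ ≤ C) {u : ℂ} (hu : u ∈ K) (z : ℂ) :
    (z * u).re ≤ suppFn K z :=
  le_csSup ⟨‖z‖ * C, by rintro _ ⟨v, hv, rfl⟩; exact re_mul_le_of_norm_le (hC v hv) z⟩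
    ⟨u, hu, rfl⟩

lemma suppFn_le (hne : K.Nonempty) {z : ℂ} {a : ℝ} (h : ∀ u ∈ K, (z * u).re ≤ a) :
    suppFn K z ≤ a :=
  csSup_le (hne.image _) (by rintro _ ⟨u, hu, rfl⟩; exact h u hu)

lemma suppFn_le_norm_mul (hne : K.Nonempty) (hC : ∀ u ∈ K, ‖u‖ ≤ C) (z : ℂ) :
    suppFn K z ≤ ‖z‖ * C :=
  suppFn_le hne fun u hu => re_mul_le_of_norm_le (hC u hu) z

lemma suppFn_add_le (hne : K.Nonempty) (hC : ∀ u ∈ K, ‖u‖ ≤ C) (z c : ℂ) :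
    suppFn K (z + c) ≤ suppFn K z + ‖c‖ * C :=
  suppFn_le hne fun u hu => by
    have := re_mul_le_suppFn hC hu z
    have := re_mul_le_of_norm_le (hC u hu) c
    rw [add_mul, add_re]
    linarith

end SuppFn

section MemExp

variable {K : Set ℂ} {f g h : ℂ → ℂ}

lemma MemExp.of_norm_le (hf : MemExp K f) (hg : MemExp K g) (hh : Differentiable ℂ h)
    (hle : ∀ z, ‖h z‖ ≤ ‖f z‖ + ‖g z‖) : MemExp K h := by
  refine ⟨hh, fun n hn => ?_⟩
  obtain ⟨A, hA⟩ := hf.2 n hn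
  obtain ⟨B, hB⟩ := hg.2 n hn
  refine ⟨A + B, ?_⟩
  rintro _ ⟨z, rfl⟩
  calc ‖h z‖ * Real.exp (-(suppFn K z) - ‖z‖ / n)
      ≤ (‖f z‖ + ‖g z‖) * Real.exp (-(suppFn K z) - ‖z‖ / n) := by gcongr; exact hle z
    _ = ‖f z‖ * Real.exp (-(suppFn K z) - ‖z‖ / n)
        + ‖g z‖ * Real.exp (-(suppFn K z) - ‖z‖ / n) := add_mul _ _ _
    _ ≤ A + B := add_le_add (hA ⟨z, rfl⟩) (hB ⟨z, rfl⟩)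

lemma MemExp.add (hf : MemExp K f) (hg : MemExp K g) : MemExp K (fun z => f z + g z) :=
  hf.of_norm_le hg (hf.1.add hg.1) fun _ => norm_add_le _ _

lemma MemExp.sub (hf : MemExp K f) (hg : MemExp K g) : MemExp K (fun z => f z - g z) :=
  hf.of_norm_le hg (hf.1.sub hg.1) fun _ => norm_sub_le _ _

lemma MemExp.comp_add_const (hK : IsBounded K) (hne : K.Nonempty) (hf : MemExp K f) (c : ℂ) :
    MemExp K (fun z => f (z + c)) := by
  obtain ⟨C, hC⟩ := hK.exists_norm_le
  refine ⟨hf.1.comp (differentiable_id.add_const c), fun n hn => ?_⟩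
  obtain ⟨B, hB⟩ := hf.2 n hn
  refine ⟨B * Real.exp (‖c‖ * C + ‖c‖ / n), ?_⟩
  rintro _ ⟨z, rfl⟩
  have hexp : -(suppFn K z) - ‖z‖ / n
      ≤ (-(suppFn K (z + c)) - ‖z + c‖ / n) + (‖c‖ * C + ‖c‖ / n) := by
    have := suppFn_add_le hne hC z c
    have : ‖z + c‖ / n ≤ ‖z‖ / n + ‖c‖ / n := by rw [← add_div]; gcongr; exact norm_add_le z c
    linarith
  calc ‖f (z + c)‖ * Real.exp (-(suppFn K z) - ‖z‖ / n)
      ≤ ‖f (z + c)‖ * Real.exp (-(suppFn K (z + c)) - ‖z + c‖ / n)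
        * Real.exp (‖c‖ * C + ‖c‖ / n) := by
        rw [mul_assoc, ← Real.exp_add]; gcongr
    _ ≤ B * Real.exp (‖c‖ * C + ‖c‖ / n) := by gcongr; exact hB ⟨z + c, rfl⟩

lemma memExp_monomial_mul_exp (hK : IsBounded K) {u : ℂ} (hu : u ∈ K) (a : ℂ) (k : ℕ) :
    MemExp K (fun z => a * z ^ k * Complex.exp (u * z)) := by
  obtain ⟨C, hC⟩ := hK.exists_norm_le
  refine ⟨by fun_prop, fun n hn => ⟨‖a‖ * (k.factorial * n ^ k), ?_⟩⟩
  rintro _ ⟨z, rfl⟩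
  have hre : (u * z).re ≤ suppFn K z := mul_comm z u ▸ re_mul_le_suppFn hC hu z
  calc ‖a * z ^ k * Complex.exp (u * z)‖ * Real.exp (-(suppFn K z) - ‖z‖ / n)
      = ‖a‖ * (‖z‖ ^ k * Real.exp ((u * z).re - suppFn K z - ‖z‖ / n)) := by
        rw [norm_mul, norm_mul, norm_pow, Complex.norm_exp, mul_assoc, mul_assoc, ← Real.exp_add]
        ring_nf
    _ ≤ ‖a‖ * (‖z‖ ^ k * Real.exp (-(‖z‖ / n))) := by gcongr; linarith
    _ ≤ ‖a‖ * (k.factorial * n ^ k) :=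
        mul_le_mul_of_nonneg_left (pow_mul_exp_neg_div_le (norm_nonneg z) k (Nat.cast_pos.2 hn))
          (norm_nonneg a)

lemma memExp_eval_mul_exp (hK : IsBounded K) {u : ℂ} (hu : u ∈ K) (q : ℂ[X]) :
    MemExp K (fun z => q.eval z * Complex.exp (u * z)) := by
  induction q using Polynomial.induction_on' with
  | add p q hp hq => simpa only [eval_add, add_mul] using hp.add hq
  | monomial k a => simpa only [eval_monomial] using memExp_monomial_mul_exp hK hu a k

lemma MemExp.norm_le_expNorm_mul (hf : MemExp K f) {n : ℕ} (hn : 0 < n) (z : ℂ) :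
    ‖f z‖ ≤ expNorm K n f * Real.exp (suppFn K z + ‖z‖ / n) :=
  calc ‖f z‖
      = ‖f z‖ * Real.exp (-(suppFn K z) - ‖z‖ / n) * Real.exp (suppFn K z + ‖z‖ / n) := by
        rw [mul_assoc, ← Real.exp_add, show -(suppFn K z) - ‖z‖ / n + (suppFn K z + ‖z‖ / n) = 0
          by ring, Real.exp_zero, mul_one]
    _ ≤ expNorm K n f * Real.exp (suppFn K z + ‖z‖ / n) := by
        gcongr; exact le_csSup (hf.2 n hn) ⟨z, rfl⟩

lemma MemExp.norm_lt_of_expNorm_lt {C : ℝ} (hne : K.Nonempty) (hC : ∀ u ∈ K, ‖u‖ ≤ C)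
    (hf : MemExp K f) {n : ℕ} (hn : 0 < n) {δ : ℝ} (hδ : expNorm K n f < δ) {R : ℝ} {z : ℂ}
    (hz : ‖z‖ ≤ R) : ‖f z‖ < δ * Real.exp (R * C + R / n) := by
  obtain ⟨u, hu⟩ := hne
  have hC0 : 0 ≤ C := (norm_nonneg u).trans (hC u hu)
  have hδ0 : 0 < δ := (Real.sSup_nonneg (by rintro _ ⟨w, rfl⟩; positivity)).trans_lt hδ
  calc ‖f z‖ ≤ expNorm K n f * Real.exp (suppFn K z + ‖z‖ / n) := hf.norm_le_expNorm_mul hn z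
    _ < δ * Real.exp (suppFn K z + ‖z‖ / n) := by gcongr
    _ ≤ δ * Real.exp (R * C + R / n) := by
        have := suppFn_le_norm_mul ⟨u, hu⟩ hC z
        gcongr
        nlinarith

end MemExp

lemma FormalMultilinearSeries.partialSum_eq_eval {𝕜 : Type*} [NontriviallyNormedField 𝕜]
    (p : FormalMultilinearSeries 𝕜 𝕜 𝕜) (m : ℕ) (z : 𝕜) :
    p.partialSum m z = (∑ k ∈ Finset.range m, monomial k (p.coeff k)).eval z := by
  simp only [partialSum, eval_finsetSum, eval_monomial, apply_eq_pow_smul_coeff, smul_eq_mul,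
    mul_comm]

lemma exists_polynomial_approx {φ : ℂ → ℂ} (hφ : Differentiable ℂ φ) (R : ℝ) {ε : ℝ}
    (hε : 0 < ε) : ∃ q : ℂ[X], ∀ z, ‖z‖ ≤ R → ‖q.eval z - φ z‖ < ε := by
  have hp := (hφ.hasFPowerSeriesOnBall 0 (zero_lt_one' NNReal)).tendstoUniformlyOn
    (r' := R.toNNReal + 1) ENNReal.coe_lt_top
  obtain ⟨m, hm⟩ := (Metric.tendstoUniformlyOn_iff.1 hp ε hε).exists
  refine ⟨∑ k ∈ Finset.range m, monomial k ((cauchyPowerSeries φ 0 (1 : NNReal)).coeff k),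
    fun z hz => ?_⟩
  have hz' : z ∈ Metric.ball (0 : ℂ) (R.toNNReal + 1 : NNReal) := by
    rw [mem_ball_zero_iff, NNReal.coe_add, NNReal.coe_one]
    linarith [R.le_coe_toNNReal]
  simpa only [dist_eq_norm, norm_sub_rev, zero_add, FormalMultilinearSeries.partialSum_eq_eval]
    using hm z hz'

lemma exists_memExp_approx {K : Set ℂ} (hK : IsBounded K) {u : ℂ} (hu : u ∈ K) {g : ℂ → ℂ}
    (hg : Differentiable ℂ g) (R : ℝ) {ε : ℝ} (hε : 0 < ε) :
    ∃ P, MemExp K P ∧ ∀ z, ‖z‖ ≤ R → ‖P z - g z‖ < ε := by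
  obtain ⟨q, hq⟩ := exists_polynomial_approx (φ := fun z => g z * Complex.exp (-(u * z)))
    (by fun_prop) R (ε := ε / Real.exp (‖u‖ * R)) (by positivity)
  refine ⟨fun z => q.eval z * Complex.exp (u * z), memExp_eval_mul_exp hK hu q, fun z hz => ?_⟩
  have hexp : ‖Complex.exp (u * z)‖ ≤ Real.exp (‖u‖ * R) := by
    rw [norm_exp]
    gcongr
    exact (re_le_norm _).trans (by rw [norm_mul]; gcongr)
  calc ‖q.eval z * Complex.exp (u * z) - g z‖
      = ‖q.eval z - g z * Complex.exp (-(u * z))‖ * ‖Complex.exp (u * z)‖ := by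
        rw [← norm_mul, sub_mul, mul_assoc, ← Complex.exp_add, neg_add_cancel, Complex.exp_zero,
          mul_one]
    _ ≤ ‖q.eval z - g z * Complex.exp (-(u * z))‖ * Real.exp (‖u‖ * R) := by gcongr
    _ < ε / Real.exp (‖u‖ * R) * Real.exp (‖u‖ * R) := by gcongr; exact hq z hz
    _ = ε := div_mul_cancel₀ _ (Real.exp_pos _).ne'

theorem stmt15_general (K : Set ℂ) (hne : K.Nonempty) (hKc : IsCompact K)
    (f : ℂ → ℂ) (hf : FHCExp K f) : FHCEnt f := by
  obtain ⟨u, hu⟩ := hne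
  obtain ⟨C, hC⟩ := hKc.isBounded.exists_norm_le
  refine ⟨hf.1.1, fun g hg R _ ε hε => ?_⟩
  obtain ⟨P, hPK, hPg⟩ := exists_memExp_approx hKc.isBounded hu hg R (half_pos hε)
  -- so that `expNorm` of these differences is a true supremum, not `sSup` of an unbounded set
  have hT : ∀ k : ℕ, MemExp K (fun z => f (z + k) - P z) := fun k =>
    (hf.1.comp_add_const hKc.isBounded ⟨u, hu⟩ k).sub hPK
  set δ := ε / 2 / Real.exp (R * C + R / (1 : ℕ))
  refine (hf.2 P hPK 1 one_pos δ (by positivity)).trans_le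
    (lowerDensity_mono fun k hk z hz => ?_)
  have hfk : ‖f (z + k) - P z‖ < ε / 2 := by
    simpa only [δ, div_mul_cancel₀ _ (Real.exp_pos _).ne'] using
      (hT k).norm_lt_of_expNorm_lt ⟨u, hu⟩ hC one_pos hk hz
  calc ‖f (z + k) - g z‖ ≤ ‖f (z + k) - P z‖ + ‖P z - g z‖ :=
        norm_sub_le_norm_sub_add_norm_sub _ _ _
    _ < ε / 2 + ε / 2 := add_lt_add hfk (hPg z hz)
    _ = ε := add_halves ε

/-- Frequent hypercyclicity for `T₁` on `Exp(K)` implies frequent hypercyclicity for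
`T₁` on `H(ℂ)`. -/
theorem stmt15 (K : Set ℂ) (hne : K.Nonempty) (hKc : IsCompact K) (hKconv : Convex ℝ K)
    (f : ℂ → ℂ) (hf : FHCExp K f) : FHCEnt f :=
  stmt15_general K hne hKc f hf
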